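/- Let w ∈ W_n and let w̃ be an ascending representative of the equivalence class of w under the relation ∼ generated by admissible operators. Then for each 0 ≤ i ≤ r−1, π_i(w) = sgn_i(w) if and only if π_i(w̃) = sgn_i(w̃). -/

import Mathlib

open scoped BigOperators

/-!
Common definitions: the complex reflection group `G(r,1,n)` recorded in one-line
notation, its one-dimensional representations, the generalized Robinson–Schensted
map to pairs of `r`-multitableaux, and the associated tableau statistics.
-/

/-- An element of `W_n = G(r,1,n)` in one-line notation
`w = [ζ^{a 0} σ 0, …, ζ^{a (n-1)} σ (n-1)]`: the nonzero entry of column `i`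
is `ζ ^ (a i)` and lies in row `σ i`. -/
@[ext]
structure GW (r n : ℕ) where
  a : Fin n → ZMod r
  σ : Equiv.Perm (Fin n)

namespace GW

variable {r n : ℕ}

instance : Mul (GW r n) := ⟨fun w v => ⟨fun j => w.a (v.σ j) + v.a j, w.σ * v.σ⟩⟩
instance : One (GW r n) := ⟨⟨fun _ => 0, 1⟩⟩
instance : Inv (GW r n) := ⟨fun w => ⟨fun j => -(w.a (w.σ⁻¹ j)), w.σ⁻¹⟩⟩

@[simp] lemma mul_a (w v : GW r n) (j : Fin n) : (w * v).a j = w.a (v.σ j) + v.a j := rfl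
@[simp] lemma mul_sigma (w v : GW r n) : (w * v).σ = w.σ * v.σ := rfl
@[simp] lemma one_a (j : Fin n) : (1 : GW r n).a j = 0 := rfl
@[simp] lemma one_sigma : (1 : GW r n).σ = 1 := rfl
@[simp] lemma inv_a (w : GW r n) (j : Fin n) : (w⁻¹).a j = -(w.a (w.σ⁻¹ j)) := rfl
@[simp] lemma inv_sigma (w : GW r n) : (w⁻¹).σ = w.σ⁻¹ := rfl

instance : Group (GW r n) where
  mul_assoc w v u := by
    ext j
    · simp [Equiv.Perm.mul_apply, add_assoc]
    · simp [mul_assoc]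
  one_mul w := by ext j <;> simp
  mul_one w := by ext j <;> simp
  inv_mul_cancel w := by
    ext j
    · simp
    · simp

end GW

/-- `ζ = exp(2π√-1 / r)`, a primitive `r`-th root of unity. -/
noncomputable def zeta (r : ℕ) : ℂ := Complex.exp (2 * Real.pi * Complex.I / r)

/-- The one-dimensional representation `sgn_i` of `W_n = G(r,1,n)`:
`sgn_i w = ζ^{i (a_1 + ⋯ + a_n)} ⬝ sgn σ`. -/
noncomputable def sgnRep (r n : ℕ) (i : ℕ) (w : GW r n) : ℂ :=
  zeta r ^ (i * ∑ j, (w.a j).val) * ((Equiv.Perm.sign w.σ : ℤ) : ℂ)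

/-- A tableau, recorded as its list of rows of labels. -/
abbrev Tab := List (List ℕ)

/-- Robinson–Schensted row insertion of the value `x` into a tableau. -/
def rowInsert : ℕ → Tab → Tab
  | x, [] => [[x]]
  | x, row :: rest =>
    if h : row.findIdx (fun y => decide (x < y)) < row.length then
      row.set (row.findIdx (fun y => decide (x < y))) x ::
        rowInsert (row.get ⟨row.findIdx (fun y => decide (x < y)), h⟩) rest
    else (row ++ [x]) :: rest

/-- The shape of a tableau: its list of row lengths. -/
def shape (T : Tab) : List ℕ := T.map List.length

/-- Append the label `lab` at the end of row `i` of the (recording) tableau `Q`. -/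
def place (Q : Tab) (i lab : ℕ) : Tab :=
  if i < Q.length then Q.set i ((Q.getD i []) ++ [lab]) else Q ++ [[lab]]

/-- One step of the Robinson–Schensted algorithm: insert the value `x` into the
insertion tableau and record the label `lab` in the new box of the recording
tableau. -/
def RSstep : Tab × Tab → ℕ × ℕ → Tab × Tab := fun PQ xl =>
  let P' := rowInsert xl.1 PQ.1
  let i := (List.range P'.length).findIdx
    (fun i => decide ((PQ.1.getD i []).length < (P'.getD i []).length))
  (P', place PQ.2 i xl.2)

/-- The classical Robinson–Schensted correspondence applied to a word of
(value, label) pairs, producing the insertion and recording tableaux. -/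
def RSword (word : List (ℕ × ℕ)) : Tab × Tab := word.foldl RSstep ([], [])

/-- The positions `i` (in increasing order) whose attached exponent `a i` equals `k`. -/
def labelIdx {r n : ℕ} (w : GW r n) (k : ℕ) : List (Fin n) :=
  (List.finRange n).filter (fun i => decide ((w.a i).val = k))

/-- The word `w^(k)` together with its recording labels: the values `σ i` (1-based)
attached to the positions `i` (1-based) with `a i = k`, in increasing order of `i`. -/
def wordPairs {r n : ℕ} (w : GW r n) (k : ℕ) : List (ℕ × ℕ) :=
  (labelIdx w k).map (fun i => ((w.σ i : ℕ) + 1, (i : ℕ) + 1))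

/-- The insertion multitableau `P(w)` of the generalized Robinson–Schensted map. -/
def Ptab {r n : ℕ} (w : GW r n) : Fin r → Tab := fun k => (RSword (wordPairs w k)).1

/-- The recording multitableau `Q(w)` of the generalized Robinson–Schensted map. -/
def Qtab {r n : ℕ} (w : GW r n) : Fin r → Tab := fun k => (RSword (wordPairs w k)).2

/-- The set of labels of a tableau. -/
def labels (T : Tab) : Finset ℕ := T.flatten.toFinset

/-- The (0-based) index of the row of `T` containing the label `x`. -/
def rowOf (T : Tab) (x : ℕ) : ℕ := T.findIdx (fun row => decide (x ∈ row))

/-- The number of inversions of a tableau: pairs `(i, j)` with `i < j` and the box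
labeled `i` in a row strictly below the box labeled `j`. -/
def invTab (T : Tab) : ℕ :=
  ((labels T ×ˢ labels T).filter (fun p => p.1 < p.2 ∧ rowOf T p.2 < rowOf T p.1)).card

/-- `crossInv S T` is the number of pairs `(j, i)` with `j > i`, `j` a label of `S`
and `i` a label of `T`, i.e. the cardinality of `Inv(S, T)`. -/
def crossInv (S T : Tab) : ℕ :=
  ((labels S ×ˢ labels T).filter (fun p => p.2 < p.1)).card

/-- The number of inversions of a multitableau. -/
def invMulti {r : ℕ} (T : Fin r → Tab) : ℕ :=
  (∑ k, invTab (T k)) + ∑ k, ∑ l, if k < l then crossInv (T k) (T l) else 0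

/-- The sign `(-1)^{inv T}` of a multitableau. -/
def signMulti {r : ℕ} (T : Fin r → Tab) : ℂ := (-1) ^ invMulti T

/-- The number of boxes in the even-indexed rows (1-based indexing) of a tableau. -/
def eTab (T : Tab) : ℕ :=
  ∑ i ∈ Finset.range T.length, if i % 2 = 1 then (T.getD i []).length else 0

/-- The total number of boxes in the even-indexed rows of a multitableau. -/
def eMulti {r : ℕ} (T : Fin r → Tab) : ℕ := ∑ k, eTab (T k)

/-- The number of boxes of a tableau. -/
def sizeTab (T : Tab) : ℕ := T.flatten.length

/-- `2 ⬝ spin T = Σ_k k ⬝ |sh(T_k)|`. -/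
def twoSpin {r : ℕ} (T : Fin r → Tab) : ℕ := ∑ k : Fin r, (k : ℕ) * sizeTab (T k)

/-- The spin statistic `spin T = (1/2) Σ_k k ⬝ |sh(T_k)|`. -/
def spin {r : ℕ} (T : Fin r → Tab) : ℚ := (twoSpin T : ℚ) / 2

/-- The function `π_i(w) = (-1)^{e(P)} (ζ^i)^{spin P + spin Q} sign(P) sign(Q)`
where `(P, Q) = RS(w)`. -/
noncomputable def piStat (r n : ℕ) (i : ℕ) (w : GW r n) : ℂ :=
  (-1) ^ eMulti (Ptab w) *
    (zeta r ^ i) ^ (((spin (Ptab w) + spin (Qtab w) : ℚ) : ℂ)) *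
    signMulti (Ptab w) * signMulti (Qtab w)

/-- `T` is a standard Young `r`-multitableau of rank `n`: each component consists of
nonempty rows of weakly decreasing lengths, labels strictly increase along rows and
down columns, and the labels used are exactly `1, …, n`, each exactly once. -/
def IsStandardMulti (r n : ℕ) (T : Fin r → Tab) : Prop :=
  (∀ k : Fin r,
      (∀ row ∈ T k, row ≠ [] ∧ List.Chain' (· < ·) row) ∧
      List.Chain' (fun r1 r2 => r2.length ≤ r1.length ∧
        ∀ j < r2.length, r1.getD j 0 < r2.getD j 0) (T k)) ∧
  (∑ k : Fin r, ((T k).flatten : Multiset ℕ)) = (Finset.Icc 1 n).val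

/-- A multitableau is ascending if every label of `T k` is smaller than every label
of `T (k+1)`. -/
def AscendingMulti {r : ℕ} (T : Fin r → Tab) : Prop :=
  ∀ (k : ℕ) (h : k + 1 < r),
    ∀ x ∈ labels (T ⟨k, by omega⟩), ∀ y ∈ labels (T ⟨k + 1, h⟩), x < y

/-- An element `w ∈ W_n` is ascending if its exponents increase weakly and, for each
`k < r - 1`, every element of the word `w^(k)` is smaller than every element of
`w^(k+1)`. -/
def AscendingElem {r n : ℕ} (w : GW r n) : Prop :=
  (∀ i j : Fin n, i ≤ j → (w.a i).val ≤ (w.a j).val) ∧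
  ∀ k : ℕ, k + 1 < r →
    ∀ x ∈ (wordPairs w k).map Prod.fst, ∀ y ∈ (wordPairs w (k + 1)).map Prod.fst, x < y

/-- The generator `s_0 = [ζ·1, 2, …, n]`. -/
def s0El (r n : ℕ) : GW r n := ⟨fun i => if (i : ℕ) = 0 then 1 else 0, 1⟩

/-- The generator `s_j` (for `1 ≤ j ≤ n - 1`): the permutation matrix of the
transposition interchanging `j` and `j + 1` (1-based values). -/
def sEl (r n : ℕ) (j : ℕ) (h1 : 1 ≤ j) (h2 : j + 1 ≤ n) : GW r n :=
  ⟨fun _ => 0, Equiv.swap ⟨j - 1, by omega⟩ ⟨j, by omega⟩⟩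

/-- The left operator `L_j(w) = s_j ⬝ w`. -/
def Lop {r n : ℕ} (w : GW r n) (j : ℕ) (h1 : 1 ≤ j) (h2 : j + 1 ≤ n) : GW r n :=
  sEl r n j h1 h2 * w

/-- The right operator `R_j(w) = w ⬝ s_j`. -/
def Rop {r n : ℕ} (w : GW r n) (j : ℕ) (h1 : 1 ≤ j) (h2 : j + 1 ≤ n) : GW r n :=
  w * sEl r n j h1 h2

/-- `L_j` is left admissible for `w`: the exponents attached to the entries with
values `j` and `j+1` differ. -/
def LeftAdm {r n : ℕ} (w : GW r n) (j : ℕ) (h1 : 1 ≤ j) (h2 : j + 1 ≤ n) : Prop :=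
  w.a (w.σ⁻¹ ⟨j - 1, by omega⟩) ≠ w.a (w.σ⁻¹ ⟨j, by omega⟩)

/-- `R_j` is right admissible for `w`: the exponents in positions `j` and `j+1`
differ, i.e. `a_j ≠ a_{j+1}`. -/
def RightAdm {r n : ℕ} (w : GW r n) (j : ℕ) (h1 : 1 ≤ j) (h2 : j + 1 ≤ n) : Prop :=
  w.a ⟨j - 1, by omega⟩ ≠ w.a ⟨j, by omega⟩

/-- A single admissible transformation: `w ↦ L_j(w)` for a left admissible `L_j`,
or `w ↦ R_j(w)` for a right admissible `R_j`. -/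
inductive AdmStep (r n : ℕ) : GW r n → GW r n → Prop
  | left (w : GW r n) (j : ℕ) (h1 : 1 ≤ j) (h2 : j + 1 ≤ n)
      (ha : LeftAdm w j h1 h2) : AdmStep r n w (Lop w j h1 h2)
  | right (w : GW r n) (j : ℕ) (h1 : 1 ≤ j) (h2 : j + 1 ≤ n)
      (ha : RightAdm w j h1 h2) : AdmStep r n w (Rop w j h1 h2)

/-!
Each admissible operator multiplies both `π_i` and `sgn_i` by `-1`. Under an admissible `L_j`
the values `j` and `j + 1` lie in different words `w^(k)`, so each word is relabelled by the
transposition `(j j+1)`, which preserves the relative order of the letters of that word.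
Robinson–Schensted insertion commutes with such relabellings, hence `P(L_j w)` is `P(w)` with
`j` and `j + 1` exchanged and `Q(L_j w) = Q(w)`. Relabelling keeps all shapes, so `e` and `spin`
do not change, while, `j` and `j + 1` sitting in different components, exactly one cross
inversion is created or destroyed and `sign P` flips. An admissible `R_j` acts in the same way on
positions, that is on `Q`. Finally `sgn_i(s_j w) = sgn_i(w s_j) = -sgn_i(w)`.
-/

open Equiv Function

lemma List.findIdx_congr_of_mem {α : Type*} {l : List α} {p q : α → Bool}
    (h : ∀ x ∈ l, p x = q x) : l.findIdx p = l.findIdx q := by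
  induction l with
  | nil => rfl
  | cons x xs ih =>
    simp only [List.findIdx_cons, h x List.mem_cons_self,
      ih fun y hy => h y (List.mem_cons_of_mem _ hy)]

lemma List.set_append_getElem_perm (l : List ℕ) (i : ℕ) (hi : i < l.length) (x : ℕ) :
    (l.set i x ++ [l[i]]).Perm (x :: l) := by
  induction l generalizing i with
  | nil => simp at hi
  | cons a l ih =>
    cases i with
    | zero => simp
    | succ i => simpa using ((ih i (by simpa using hi)).cons a).trans (List.Perm.swap x a l)

lemma List.filter_finRange_comp_eq_map {n : ℕ} {e : Equiv.Perm (Fin n)} (he : Involutive e)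
    (p : Fin n → Bool) (hp : ((List.finRange n).filter p).Pairwise fun a b => e a < e b) :
    (List.finRange n).filter (p ∘ e) = ((List.finRange n).filter p).map e := by
  refine List.Subset.antisymm_of_pairwise (r := (· < ·))
    ((List.pairwise_lt_finRange n).sublist List.filter_sublist) (List.pairwise_map.2 hp)
    (fun x hx => ?_) (fun x hx => ?_)
  · simp only [List.mem_filter, List.mem_finRange, true_and, Function.comp_apply] at hx
    exact List.mem_map.2 ⟨e x, by simpa using hx, he x⟩
  · obtain ⟨y, hy, rfl⟩ := List.mem_map.1 hx
    simpa [he y] using hy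

def relabel (f : ℕ → ℕ) (T : Tab) : Tab := T.map (List.map f)

section Relabel

variable (f : ℕ → ℕ) (T : Tab)

@[simp] lemma relabel_id : relabel id T = T := by simp [relabel]

@[simp] lemma length_relabel : (relabel f T).length = T.length := List.length_map _

lemma getD_relabel (i : ℕ) : (relabel f T).getD i [] = (T.getD i []).map f := by
  simp only [relabel, List.getD_eq_getElem?_getD, List.getElem?_map]
  cases T[i]? <;> rfl

lemma flatten_relabel : (relabel f T).flatten = T.flatten.map f := by
  simp [relabel, List.map_flatten]

lemma relabel_involutive {f : ℕ → ℕ} (hf : Involutive f) :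
    Involutive (relabel f) := fun T => by
  simp [relabel, Function.comp_def, hf _]

lemma labels_relabel : labels (relabel f T) = (labels T).image f := by
  ext
  simp only [labels, flatten_relabel, List.mem_toFinset, Finset.mem_image, List.mem_map]

lemma rowOf_relabel {f} (hf : Injective f) (x : ℕ) :
    rowOf (relabel f T) (f x) = rowOf T x := by
  simp only [rowOf, relabel, List.findIdx_map, Function.comp_def, List.mem_map_of_injective hf]

lemma sizeTab_relabel : sizeTab (relabel f T) = sizeTab T := by
  rw [sizeTab, sizeTab, flatten_relabel, List.length_map]

lemma eTab_relabel : eTab (relabel f T) = eTab T := by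
  simp only [eTab, length_relabel, getD_relabel, List.length_map]

end Relabel

lemma rowInsert_flatten_perm (x : ℕ) (T : Tab) :
    (rowInsert x T).flatten.Perm (x :: T.flatten) := by
  induction T generalizing x with
  | nil => simp [rowInsert]
  | cons row rest ih =>
    unfold rowInsert
    split_ifs with h
    · simp only [List.flatten_cons]
      refine ((ih _).append_left _).trans ?_
      simpa using (row.set_append_getElem_perm _ h x).append_right rest.flatten
    · simp

lemma rowInsert_relabel {f : ℕ → ℕ} (x : ℕ) (T : Tab)
    (hf : StrictMonoOn f {y | y ∈ x :: T.flatten}) :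
    rowInsert (f x) (relabel f T) = relabel f (rowInsert x T) := by
  induction T generalizing x with
  | nil => simp [rowInsert, relabel]
  | cons row rest ih =>
    have hidx : (row.map f).findIdx (fun y => decide (f x < y)) =
        row.findIdx (fun y => decide (x < y)) := by
      rw [List.findIdx_map]
      refine List.findIdx_congr_of_mem fun y hy => ?_
      simp [hf.lt_iff_lt (a := x) (b := y) (by simp) (by simp [hy])]
    show rowInsert (f x) (row.map f :: relabel f rest) = _
    unfold rowInsert
    by_cases hlt : row.findIdx (fun y => decide (x < y)) < row.length
    · rw [dif_pos (by simpa [hidx] using hlt), dif_pos hlt]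
      simp only [List.get_eq_getElem, hidx, List.getElem_map]
      rw [ih]
      · simp [relabel, List.map_set]
      · refine hf.mono fun y hy => ?_
        simp only [List.mem_cons, List.flatten_cons, List.mem_append, Set.mem_ofPred_eq] at hy ⊢
        rcases hy with rfl | hy
        · exact Or.inr (Or.inl (List.getElem_mem _))
        · exact Or.inr (Or.inr hy)
    · rw [dif_neg (by simpa [hidx] using hlt), dif_neg hlt]
      simp [relabel]

lemma place_relabel (g : ℕ → ℕ) (Q : Tab) (i lab : ℕ) :
    place (relabel g Q) i (g lab) = relabel g (place Q i lab) := by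
  unfold place
  split_ifs with h h' h'
  · rw [getD_relabel]
    simp [relabel, List.map_set]
  all_goals simp_all [relabel]

lemma place_flatten_perm (Q : Tab) (i lab : ℕ) :
    (place Q i lab).flatten.Perm (lab :: Q.flatten) := by
  unfold place
  split_ifs with h
  · induction Q generalizing i with
    | nil => simp at h
    | cons q rest ih =>
      cases i with
      | zero => simp
      | succ i =>
        simpa using ((ih i (by simpa using h)).append_left q).trans List.perm_middle.symm.symm
  · simp

lemma RSstep_relabel_fst {f : ℕ → ℕ} (P Q : Tab) (x lab : ℕ)
    (hf : StrictMonoOn f {y | y ∈ x :: P.flatten}) :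
    RSstep (relabel f P, Q) (f x, lab) = Prod.map (relabel f) id (RSstep (P, Q) (x, lab)) := by
  simp only [RSstep, rowInsert_relabel x P hf, length_relabel, getD_relabel, List.length_map,
    Prod.map, id]

lemma RSstep_relabel_snd (g : ℕ → ℕ) (P Q : Tab) (x lab : ℕ) :
    RSstep (P, relabel g Q) (x, g lab) = Prod.map id (relabel g) (RSstep (P, Q) (x, lab)) := by
  simp only [RSstep, place_relabel, Prod.map, id]

lemma foldl_RSstep_flatten_perm (word : List (ℕ × ℕ)) (P Q : Tab) :
    (word.foldl RSstep (P, Q)).1.flatten.Perm (word.map Prod.fst ++ P.flatten) ∧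
      (word.foldl RSstep (P, Q)).2.flatten.Perm (word.map Prod.snd ++ Q.flatten) := by
  induction word generalizing P Q with
  | nil => simp
  | cons xl word ih =>
    obtain ⟨hP, hQ⟩ := ih (RSstep (P, Q) xl).1 (RSstep (P, Q) xl).2
    refine ⟨hP.trans ?_, hQ.trans ?_⟩
    · exact ((rowInsert_flatten_perm _ P).append_left _).trans List.perm_middle
    · exact ((place_flatten_perm Q _ _).append_left _).trans List.perm_middle

lemma foldl_RSstep_map_fst {f : ℕ → ℕ} (word : List (ℕ × ℕ)) (P Q : Tab)
    (hf : StrictMonoOn f {y | y ∈ word.map Prod.fst ++ P.flatten}) :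
    (word.map (Prod.map f id)).foldl RSstep (relabel f P, Q)
      = Prod.map (relabel f) id (word.foldl RSstep (P, Q)) := by
  induction word generalizing P Q with
  | nil => rfl
  | cons xl word ih =>
    obtain ⟨x, lab⟩ := xl
    have hx : StrictMonoOn f {y | y ∈ x :: P.flatten} :=
      hf.mono fun y hy => by
        simp only [Set.mem_ofPred_eq, List.mem_cons, List.map_cons, List.cons_append,
          List.mem_append] at hy ⊢
        tauto
    simp only [List.map_cons, List.foldl_cons, Prod.map_apply, id, RSstep_relabel_fst P Q x lab hx]
    exact ih _ _ (hf.mono fun y hy =>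
      List.perm_middle.subset (((rowInsert_flatten_perm x P).append_left _).subset hy))

lemma foldl_RSstep_map_snd (g : ℕ → ℕ) (word : List (ℕ × ℕ)) (P Q : Tab) :
    (word.map (Prod.map id g)).foldl RSstep (P, relabel g Q)
      = Prod.map id (relabel g) (word.foldl RSstep (P, Q)) := by
  induction word generalizing P Q with
  | nil => rfl
  | cons xl word ih =>
    obtain ⟨x, lab⟩ := xl
    simp only [List.map_cons, List.foldl_cons, Prod.map_apply, id, RSstep_relabel_snd]
    exact ih _ _

lemma RSword_map_fst {f : ℕ → ℕ} (word : List (ℕ × ℕ))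
    (hf : StrictMonoOn f {y | y ∈ word.map Prod.fst}) :
    RSword (word.map (Prod.map f id)) = Prod.map (relabel f) id (RSword word) :=
  foldl_RSstep_map_fst word [] [] (by simpa using hf)

lemma RSword_map_snd (g : ℕ → ℕ) (word : List (ℕ × ℕ)) :
    RSword (word.map (Prod.map id g)) = Prod.map id (relabel g) (RSword word) :=
  foldl_RSstep_map_snd g word [] []

lemma labels_RSword_fst (word : List (ℕ × ℕ)) :
    labels (RSword word).1 = (word.map Prod.fst).toFinset := by
  ext
  simpa [labels, RSword] using (foldl_RSstep_flatten_perm word [] []).1.mem_iff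

lemma labels_RSword_snd (word : List (ℕ × ℕ)) :
    labels (RSword word).2 = (word.map Prod.snd).toFinset := by
  ext
  simpa [labels, RSword] using (foldl_RSstep_flatten_perm word [] []).2.mem_iff

lemma Finset.card_filter_product_image {α β γ δ : Type*} [DecidableEq β] [DecidableEq δ]
    {f : α → β} {g : γ → δ} (hf : Injective f) (hg : Injective g)
    (s : Finset α) (t : Finset γ) (p : β × δ → Prop) [DecidablePred p] :
    ((s.image f ×ˢ t.image g).filter p).card = ((s ×ˢ t).filter (p ∘ Prod.map f g)).card := by
  rw [← Finset.prodMap_image_product, Finset.filter_image,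
    Finset.card_image_of_injective _ (hf.prodMap hg)]
  rfl

lemma Finset.card_filter_eq_card_filter_add_one {α : Type*} [DecidableEq α] {s : Finset α}
    {p q : α → Prop} [DecidablePred p] [DecidablePred q] {a : α} (ha : a ∈ s) (hq : q a)
    (hp : ¬ p a) (h : ∀ b ∈ s, b ≠ a → (q b ↔ p b)) :
    (s.filter q).card = (s.filter p).card + 1 := by
  have : s.filter q = insert a (s.filter p) := by
    ext b
    by_cases hb : b = a
    · subst hb; simp [ha, hq]
    · simp only [Finset.mem_filter, Finset.mem_insert, hb, false_or]
      exact and_congr_right fun hbs => h b hbs hb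
  rw [this, Finset.card_insert_of_notMem (by simp [hp])]

section SwapSucc

variable {j : ℕ}

lemma swap_succ_lt_swap_succ_iff {x y : ℕ} (h : ¬(x = j ∧ y = j + 1))
    (h' : ¬(x = j + 1 ∧ y = j)) : swap j (j + 1) x < swap j (j + 1) y ↔ x < y := by
  simp only [swap_apply_def]
  split_ifs <;> omega

lemma strictMonoOn_swap_succ {S : Set ℕ} (h : ¬(j ∈ S ∧ j + 1 ∈ S)) :
    StrictMonoOn (swap j (j + 1)) S := by
  intro x hx y hy hxy
  refine (swap_succ_lt_swap_succ_iff ?_ ?_).2 hxy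
  · rintro ⟨rfl, rfl⟩; exact h ⟨hx, hy⟩
  · omega

lemma invTab_relabel_swap {T : Tab} (h : ¬(j ∈ labels T ∧ j + 1 ∈ labels T)) :
    invTab (relabel (swap j (j + 1)) T) = invTab T := by
  rw [invTab, labels_relabel, Finset.card_filter_product_image (swap j _).injective
    (swap j _).injective]
  refine congrArg Finset.card (Finset.filter_congr fun ⟨x, y⟩ hxy => ?_)
  rw [Finset.mem_product] at hxy
  simp only [Function.comp_apply, Prod.map_apply, rowOf_relabel _ (swap j _).injective]
  rw [swap_succ_lt_swap_succ_iff]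
  · rintro ⟨rfl, rfl⟩; exact h hxy
  · rintro ⟨rfl, rfl⟩; exact h hxy.symm

lemma crossInv_relabel_swap {S T : Tab} (h : ¬(j ∈ labels S ∧ j + 1 ∈ labels T))
    (h' : ¬(j + 1 ∈ labels S ∧ j ∈ labels T)) :
    crossInv (relabel (swap j (j + 1)) S) (relabel (swap j (j + 1)) T) = crossInv S T := by
  rw [crossInv, labels_relabel, labels_relabel, Finset.card_filter_product_image
    (swap j _).injective (swap j _).injective]
  refine congrArg Finset.card (Finset.filter_congr fun ⟨x, y⟩ hxy => ?_)
  rw [Finset.mem_product] at hxy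
  refine swap_succ_lt_swap_succ_iff ?_ ?_
  · rintro ⟨rfl, rfl⟩; exact h' hxy
  · rintro ⟨rfl, rfl⟩; exact h hxy

lemma crossInv_relabel_swap_of_mem {S T : Tab} (hS : j ∈ labels S) (hT : j + 1 ∈ labels T)
    (hS' : j + 1 ∉ labels S) (hT' : j ∉ labels T) :
    crossInv (relabel (swap j (j + 1)) S) (relabel (swap j (j + 1)) T) = crossInv S T + 1 := by
  rw [crossInv, labels_relabel, labels_relabel, Finset.card_filter_product_image
    (swap j _).injective (swap j _).injective]
  refine Finset.card_filter_eq_card_filter_add_one (a := (j, j + 1))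
    (Finset.mem_product.2 ⟨hS, hT⟩) (by simp) (by simp) fun ⟨x, y⟩ hxy hne => ?_
  rw [Finset.mem_product] at hxy
  refine swap_succ_lt_swap_succ_iff ?_ ?_
  · rintro ⟨rfl, rfl⟩; exact hS' hxy.1
  · rintro ⟨rfl, rfl⟩; exact hne rfl

end SwapSucc

lemma odd_sum_add_sum_of_eq_add_one {ι : Type*} [Fintype ι] [DecidableEq ι] {f g : ι → ℕ}
    (i₀ : ι) (h₀ : f i₀ = g i₀ + 1) (h : ∀ i ≠ i₀, f i = g i) :
    Odd (∑ i, f i + ∑ i, g i) := by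
  rw [Fintype.sum_eq_add_sum_compl i₀ f, Fintype.sum_eq_add_sum_compl i₀ g, h₀,
    Finset.sum_congr rfl fun i hi => h i (Finset.mem_compl.1 hi ∘ Finset.mem_singleton.2)]
  exact ⟨g i₀ + ∑ i ∈ {i₀}ᶜ, g i, by ring⟩

lemma signMulti_eq_neg_of_odd {r : ℕ} {T T' : Fin r → Tab} (h : Odd (invMulti T' + invMulti T)) :
    signMulti T' = -signMulti T := by
  have hodd : (-1 : ℂ) ^ invMulti T' * (-1) ^ invMulti T = -1 := by rw [← pow_add, h.neg_one_pow]
  have hsq : ((-1 : ℂ) ^ invMulti T) ^ 2 = 1 := by rw [← pow_mul, pow_mul', neg_one_sq, one_pow]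
  unfold signMulti
  linear_combination (-1 : ℂ) ^ invMulti T * hodd - (-1 : ℂ) ^ invMulti T' * hsq

section Multitableau

variable {r : ℕ}

lemma eMulti_relabel (f : ℕ → ℕ) (T : Fin r → Tab) :
    eMulti (fun k => relabel f (T k)) = eMulti T := by
  simp only [eMulti, eTab_relabel]

lemma twoSpin_relabel (f : ℕ → ℕ) (T : Fin r → Tab) :
    twoSpin (fun k => relabel f (T k)) = twoSpin T := by
  simp only [twoSpin, sizeTab_relabel]

variable {T : Fin r → Tab}

lemma eq_of_mem_labels (hT : Pairwise (Disjoint on fun k => labels (T k))) {x : ℕ}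
    {k l : Fin r} (hk : x ∈ labels (T k)) (hl : x ∈ labels (T l)) : k = l := by
  by_contra h
  exact Finset.disjoint_left.1 (hT h) hk hl

variable {j : ℕ} {k₁ k₂ : Fin r}

lemma not_mem_labels_and_succ_mem_labels
    (hT : Pairwise (Disjoint on fun k => labels (T k))) (hk : k₁ ≠ k₂)
    (h₁ : j ∈ labels (T k₁)) (h₂ : j + 1 ∈ labels (T k₂)) (k : Fin r) :
    ¬(j ∈ labels (T k) ∧ j + 1 ∈ labels (T k)) :=
  fun ⟨hj, hj₁⟩ => hk ((eq_of_mem_labels hT hj h₁).symm.trans (eq_of_mem_labels hT hj₁ h₂))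

lemma odd_invMulti_relabel_swap_add_of_lt
    (hT : Pairwise (Disjoint on fun k => labels (T k))) (hk : k₁ < k₂)
    (h₁ : j ∈ labels (T k₁)) (h₂ : j + 1 ∈ labels (T k₂)) :
    Odd (invMulti (fun k => relabel (swap j (j + 1)) (T k)) + invMulti T) := by
  have hcross : Odd ((∑ k, ∑ l, if k < l then crossInv (relabel (swap j (j + 1)) (T k))
      (relabel (swap j (j + 1)) (T l)) else 0) +
      ∑ k, ∑ l, if k < l then crossInv (T k) (T l) else 0) := by
    simp only [← Fintype.sum_prod_type']
    refine odd_sum_add_sum_of_eq_add_one (k₁, k₂) ?_ fun ⟨k, l⟩ hkl => ?_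
    · simp only [if_pos hk]
      exact crossInv_relabel_swap_of_mem h₁ h₂
        (fun h => hk.ne (eq_of_mem_labels hT h h₂)) (fun h => hk.ne (eq_of_mem_labels hT h₁ h))
    · split_ifs with hlt
      · refine crossInv_relabel_swap (fun ⟨hj, hj₁⟩ => hkl ?_) (fun ⟨hj₁, hj⟩ => ?_)
        · exact Prod.ext (eq_of_mem_labels hT hj h₁) (eq_of_mem_labels hT hj₁ h₂)
        · obtain rfl := eq_of_mem_labels hT hj₁ h₂
          obtain rfl := eq_of_mem_labels hT hj h₁
          exact hk.asymm hlt
      · rfl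
  unfold invMulti
  simp only [invTab_relabel_swap (not_mem_labels_and_succ_mem_labels hT hk.ne h₁ h₂ _)]
  convert hcross.add_even (even_two_mul (∑ k, invTab (T k))) using 1
  ring

lemma signMulti_relabel_swap (hT : Pairwise (Disjoint on fun k => labels (T k)))
    (hk : k₁ ≠ k₂) (h₁ : j ∈ labels (T k₁)) (h₂ : j + 1 ∈ labels (T k₂)) :
    signMulti (fun k => relabel (swap j (j + 1)) (T k)) = -signMulti T := by
  refine signMulti_eq_neg_of_odd ?_
  rcases hk.lt_or_gt with hlt | hlt
  · exact odd_invMulti_relabel_swap_add_of_lt hT hlt h₁ h₂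
  · -- undoing the relabelling exchanges the roles of `k₁` and `k₂`
    have hinv := relabel_involutive (f := swap j (j + 1)) (swap_apply_self _ _)
    have hT' : Pairwise (Disjoint on fun k => labels (relabel (swap j (j + 1)) (T k))) :=
      fun k l hkl => by
        simpa only [labels_relabel] using (Finset.disjoint_image (swap j _).injective).2 (hT hkl)
    have h₁' : j ∈ labels (relabel (swap j (j + 1)) (T k₂)) := by
      rw [labels_relabel]; exact Finset.mem_image.2 ⟨j + 1, h₂, swap_apply_right _ _⟩
    have h₂' : j + 1 ∈ labels (relabel (swap j (j + 1)) (T k₁)) := by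
      rw [labels_relabel]; exact Finset.mem_image.2 ⟨j, h₁, swap_apply_left _ _⟩
    simpa only [hinv _, add_comm] using odd_invMulti_relabel_swap_add_of_lt hT' hlt h₁' h₂'

end Multitableau

/-- The transposition underlying `s_j`, on the 0-based positions `j - 1` and `j`. -/
def adjSwap {n : ℕ} (j : ℕ) (hj : j + 1 ≤ n) : Perm (Fin n) := swap ⟨j - 1, by omega⟩ ⟨j, hj⟩

section AdmissibleOperators

variable {r n j : ℕ}

section

variable (h1 : 1 ≤ j) (h2 : j + 1 ≤ n) (u : GW r n)

@[simp] lemma Lop_a : (Lop u j h1 h2).a = u.a := funext fun _ => zero_add _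

@[simp] lemma Lop_σ : (Lop u j h1 h2).σ = adjSwap j h2 * u.σ := rfl

@[simp] lemma Rop_a : (Rop u j h1 h2).a = u.a ∘ adjSwap j h2 := funext fun _ => add_zero _

@[simp] lemma Rop_σ : (Rop u j h1 h2).σ = u.σ * adjSwap j h2 := rfl

end

lemma adjSwap_involutive (hj : j + 1 ≤ n) : Involutive (adjSwap j hj) :=
  swap_apply_self _ _

lemma val_adjSwap_add_one (h1 : 1 ≤ j) (h2 : j + 1 ≤ n) (m : Fin n) :
    (adjSwap j h2 m : ℕ) + 1 = swap j (j + 1) ((m : ℕ) + 1) := by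
  simp only [adjSwap, swap_apply_def, Fin.ext_iff]
  split_ifs <;> (try simp) <;> omega

lemma sign_adjSwap (h1 : 1 ≤ j) (h2 : j + 1 ≤ n) : Perm.sign (adjSwap j h2) = -1 :=
  Perm.sign_swap (Fin.ne_of_val_ne (by simp; omega))

lemma adjSwap_lt_adjSwap (h1 : 1 ≤ j) (h2 : j + 1 ≤ n) {a b : Fin n} (hab : a < b)
    (h : ¬(a = ⟨j - 1, (j.sub_le 1).trans_lt h2⟩ ∧ b = ⟨j, h2⟩)) :
    adjSwap j h2 a < adjSwap j h2 b := by
  rw [Fin.lt_def, ← add_lt_add_iff_right 1, val_adjSwap_add_one h1, val_adjSwap_add_one h1]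
  refine (swap_succ_lt_swap_succ_iff ?_ ?_).2 (by simpa using hab)
  · exact fun ⟨ha, hb⟩ => h ⟨Fin.ext (by simp; omega), Fin.ext (by simp; omega)⟩
  · rw [Fin.lt_def] at hab
    omega

end AdmissibleOperators

section Words

variable {r n j : ℕ}

lemma mem_labels_Ptab {w : GW r n} {k : Fin r} {x : ℕ} :
    x ∈ labels (Ptab w k) ↔ ∃ i, (w.a i).val = k ∧ (w.σ i : ℕ) + 1 = x := by
  simp [Ptab, labels_RSword_fst, wordPairs, labelIdx, Function.comp_def]

lemma mem_labels_Qtab {w : GW r n} {k : Fin r} {x : ℕ} :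
    x ∈ labels (Qtab w k) ↔ ∃ i : Fin n, (w.a i).val = k ∧ (i : ℕ) + 1 = x := by
  simp [Qtab, labels_RSword_snd, wordPairs, labelIdx, Function.comp_def]

lemma pairwise_disjoint_labels_Ptab (w : GW r n) :
    Pairwise (Disjoint on fun k => labels (Ptab w k)) := by
  refine fun k l hkl => Finset.disjoint_left.2 fun x hk hl => hkl ?_
  obtain ⟨i, hik, rfl⟩ := mem_labels_Ptab.1 hk
  obtain ⟨i', hil, hi⟩ := mem_labels_Ptab.1 hl
  obtain rfl : i' = i := w.σ.injective (Fin.ext (by omega))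
  exact Fin.ext (hik.symm.trans hil)

lemma pairwise_disjoint_labels_Qtab (w : GW r n) :
    Pairwise (Disjoint on fun k => labels (Qtab w k)) := by
  refine fun k l hkl => Finset.disjoint_left.2 fun x hk hl => hkl ?_
  obtain ⟨i, hik, rfl⟩ := mem_labels_Qtab.1 hk
  obtain ⟨i', hil, hi⟩ := mem_labels_Qtab.1 hl
  obtain rfl : i' = i := Fin.ext (by omega)
  exact Fin.ext (hik.symm.trans hil)

lemma exists_mem_labels_Ptab_of_leftAdm [NeZero r] {u : GW r n} {h1 : 1 ≤ j}
    {h2 : j + 1 ≤ n} (ha : LeftAdm u j h1 h2) :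
    ∃ k₁ k₂ : Fin r, k₁ ≠ k₂ ∧ j ∈ labels (Ptab u k₁) ∧ j + 1 ∈ labels (Ptab u k₂) := by
  refine ⟨⟨_, ZMod.val_lt (u.a (u.σ⁻¹ ⟨j - 1, by omega⟩))⟩,
    ⟨_, ZMod.val_lt (u.a (u.σ⁻¹ ⟨j, by omega⟩))⟩, fun h => ha (ZMod.val_injective r ?_),
    mem_labels_Ptab.2 ⟨_, rfl, ?_⟩, mem_labels_Ptab.2 ⟨_, rfl, ?_⟩⟩
  · exact Fin.val_eq_of_eq h
  · simp; omega
  · simp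

lemma exists_mem_labels_Qtab_of_rightAdm [NeZero r] {u : GW r n} {h1 : 1 ≤ j}
    {h2 : j + 1 ≤ n} (ha : RightAdm u j h1 h2) :
    ∃ k₁ k₂ : Fin r, k₁ ≠ k₂ ∧ j ∈ labels (Qtab u k₁) ∧ j + 1 ∈ labels (Qtab u k₂) := by
  refine ⟨⟨_, ZMod.val_lt (u.a ⟨j - 1, by omega⟩)⟩, ⟨_, ZMod.val_lt (u.a ⟨j, by omega⟩)⟩,
    fun h => ha (ZMod.val_injective r (Fin.val_eq_of_eq h)),
    mem_labels_Qtab.2 ⟨_, rfl, ?_⟩, mem_labels_Qtab.2 ⟨_, rfl, rfl⟩⟩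
  simp only
  omega

lemma wordPairs_Lop (u : GW r n) (h1 : 1 ≤ j) (h2 : j + 1 ≤ n) (k : ℕ) :
    wordPairs (Lop u j h1 h2) k = (wordPairs u k).map (Prod.map (swap j (j + 1)) id) := by
  simp [wordPairs, labelIdx, Perm.mul_apply, val_adjSwap_add_one h1 h2]

lemma RSword_wordPairs_Lop [NeZero r] {u : GW r n} {h1 : 1 ≤ j} {h2 : j + 1 ≤ n}
    (ha : LeftAdm u j h1 h2) (k : Fin r) :
    RSword (wordPairs (Lop u j h1 h2) k)
      = Prod.map (relabel (swap j (j + 1))) id (RSword (wordPairs u k)) := by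
  obtain ⟨k₁, k₂, hk, h₁, h₂⟩ := exists_mem_labels_Ptab_of_leftAdm ha
  rw [wordPairs_Lop, RSword_map_fst]
  refine strictMonoOn_swap_succ ?_
  simpa [Ptab, labels_RSword_fst] using
    not_mem_labels_and_succ_mem_labels (pairwise_disjoint_labels_Ptab u) hk h₁ h₂ k

lemma Ptab_Lop [NeZero r] {u : GW r n} {h1 : 1 ≤ j} {h2 : j + 1 ≤ n} (ha : LeftAdm u j h1 h2) :
    Ptab (Lop u j h1 h2) = fun k => relabel (swap j (j + 1)) (Ptab u k) :=
  funext fun k => congrArg Prod.fst (RSword_wordPairs_Lop ha k)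

lemma Qtab_Lop [NeZero r] {u : GW r n} {h1 : 1 ≤ j} {h2 : j + 1 ≤ n} (ha : LeftAdm u j h1 h2) :
    Qtab (Lop u j h1 h2) = Qtab u :=
  funext fun k => by simp [Qtab, RSword_wordPairs_Lop ha]

lemma labelIdx_Rop [NeZero r] {u : GW r n} {h1 : 1 ≤ j} {h2 : j + 1 ≤ n}
    (ha : RightAdm u j h1 h2) (k : ℕ) :
    labelIdx (Rop u j h1 h2) k = (labelIdx u k).map (adjSwap j h2) := by
  rw [labelIdx, Rop_a]
  refine List.filter_finRange_comp_eq_map (adjSwap_involutive h2) (fun i => (u.a i).val = k)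
    (((List.pairwise_lt_finRange n).sublist List.filter_sublist).imp_of_mem
      fun {a b} ha' hb' hab => adjSwap_lt_adjSwap h1 h2 hab ?_)
  rintro ⟨rfl, rfl⟩
  simp only [List.mem_filter, List.mem_finRange, true_and, decide_eq_true_eq] at ha' hb'
  exact ha (ZMod.val_injective r (ha'.trans hb'.symm))

lemma wordPairs_Rop [NeZero r] {u : GW r n} {h1 : 1 ≤ j} {h2 : j + 1 ≤ n}
    (ha : RightAdm u j h1 h2) (k : ℕ) :
    wordPairs (Rop u j h1 h2) k = (wordPairs u k).map (Prod.map id (swap j (j + 1))) := by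
  simp [wordPairs, labelIdx_Rop ha, Perm.mul_apply, adjSwap_involutive h2 _,
    val_adjSwap_add_one h1 h2]

lemma Ptab_Rop [NeZero r] {u : GW r n} {h1 : 1 ≤ j} {h2 : j + 1 ≤ n} (ha : RightAdm u j h1 h2) :
    Ptab (Rop u j h1 h2) = Ptab u :=
  funext fun k => by simp [Ptab, wordPairs_Rop ha, RSword_map_snd]

lemma Qtab_Rop [NeZero r] {u : GW r n} {h1 : 1 ≤ j} {h2 : j + 1 ≤ n} (ha : RightAdm u j h1 h2) :
    Qtab (Rop u j h1 h2) = fun k => relabel (swap j (j + 1)) (Qtab u k) :=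
  funext fun k => by simp [Qtab, wordPairs_Rop ha, RSword_map_snd]

end Words

section Statistics

variable {r n : ℕ}

lemma piStat_eq_neg {u v : GW r n} {f g : ℕ → ℕ} (hP : Ptab v = fun k => relabel f (Ptab u k))
    (hQ : Qtab v = fun k => relabel g (Qtab u k))
    (hsign : signMulti (Ptab v) * signMulti (Qtab v) = -(signMulti (Ptab u) * signMulti (Qtab u)))
    (i : ℕ) : piStat r n i v = -piStat r n i u := by
  have hspin : spin (Ptab v) + spin (Qtab v) = spin (Ptab u) + spin (Qtab u) := by
    rw [spin, spin, hP, hQ, twoSpin_relabel, twoSpin_relabel, spin, spin]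
  unfold piStat
  rw [hspin, mul_assoc _ (signMulti _), hsign, hP, eMulti_relabel]
  ring

lemma sgnRep_eq_neg {u v : GW r n} (ha : ∑ m, (v.a m).val = ∑ m, (u.a m).val)
    (hσ : Perm.sign v.σ = -Perm.sign u.σ) (i : ℕ) : sgnRep r n i v = -sgnRep r n i u := by
  simp only [sgnRep, ha, hσ, Units.val_neg, Int.cast_neg, mul_neg]

variable {j : ℕ} {h1 : 1 ≤ j} {h2 : j + 1 ≤ n}

lemma sgnRep_Lop (u : GW r n) (i : ℕ) : sgnRep r n i (Lop u j h1 h2) = -sgnRep r n i u :=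
  sgnRep_eq_neg (by rw [Lop_a]) (by rw [Lop_σ, Perm.sign_mul, sign_adjSwap h1 h2, neg_one_mul]) i

lemma sgnRep_Rop (u : GW r n) (i : ℕ) : sgnRep r n i (Rop u j h1 h2) = -sgnRep r n i u :=
  sgnRep_eq_neg (by rw [Rop_a]; exact Equiv.sum_comp (adjSwap j h2) fun m => (u.a m).val)
    (by rw [Rop_σ, Perm.sign_mul, sign_adjSwap h1 h2, mul_neg_one]) i

lemma piStat_Lop [NeZero r] {u : GW r n} (ha : LeftAdm u j h1 h2) (i : ℕ) :
    piStat r n i (Lop u j h1 h2) = -piStat r n i u := by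
  obtain ⟨k₁, k₂, hk, h₁, h₂⟩ := exists_mem_labels_Ptab_of_leftAdm ha
  refine piStat_eq_neg (g := id) (Ptab_Lop ha) (by simp only [Qtab_Lop ha, relabel_id]) ?_ i
  rw [Ptab_Lop ha, Qtab_Lop ha, signMulti_relabel_swap (pairwise_disjoint_labels_Ptab u) hk h₁ h₂,
    neg_mul]

lemma piStat_Rop [NeZero r] {u : GW r n} (ha : RightAdm u j h1 h2) (i : ℕ) :
    piStat r n i (Rop u j h1 h2) = -piStat r n i u := by
  obtain ⟨k₁, k₂, hk, h₁, h₂⟩ := exists_mem_labels_Qtab_of_rightAdm ha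
  refine piStat_eq_neg (f := id) (by simp only [Ptab_Rop ha, relabel_id]) (Qtab_Rop ha) ?_ i
  rw [Ptab_Rop ha, Qtab_Rop ha, signMulti_relabel_swap (pairwise_disjoint_labels_Qtab u) hk h₁ h₂,
    mul_neg]

end Statistics

lemma AdmStep.piStat_eq_sgnRep_iff {r n : ℕ} [NeZero r] {u v : GW r n} (h : AdmStep r n u v)
    (i : ℕ) : piStat r n i u = sgnRep r n i u ↔ piStat r n i v = sgnRep r n i v := by
  cases h with
  | left j h1 h2 ha => rw [piStat_Lop ha, sgnRep_Lop, neg_inj]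
  | right j h1 h2 ha => rw [piStat_Rop ha, sgnRep_Rop, neg_inj]

theorem piStat_eq_sgn_iff_of_ascending_rep_general (r n : ℕ) (hr : 1 ≤ r) (w wt : GW r n)
    (hrel : Relation.EqvGen (AdmStep r n) w wt) (i : ℕ) :
    piStat r n i w = sgnRep r n i w ↔ piStat r n i wt = sgnRep r n i wt := by
  have : NeZero r := NeZero.of_pos hr
  have hequiv : Equivalence fun u v : GW r n =>
      (piStat r n i u = sgnRep r n i u ↔ piStat r n i v = sgnRep r n i v) :=
    ⟨fun _ => Iff.rfl, Iff.symm, Iff.trans⟩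
  exact hequiv.eqvGen_iff.1 (Relation.EqvGen.mono (fun _ _ h => h.piStat_eq_sgnRep_iff i) _ _ hrel)

/-- **Lemma.** Let `w ∈ W_n` and let `wt` be an ascending representative of the
equivalence class of `w` under the relation generated by admissible operators.
Then for each `0 ≤ i ≤ r - 1`, `π_i w = sgn_i w` if and only if
`π_i wt = sgn_i wt`. -/
theorem piStat_eq_sgn_iff_of_ascending_rep (r n : ℕ) (hr : 1 ≤ r) (hn : 1 ≤ n)
    (w wt : GW r n) (hasc : AscendingElem wt)
    (hrel : Relation.EqvGen (AdmStep r n) w wt) (i : ℕ) (hi : i ≤ r - 1) :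
    piStat r n i w = sgnRep r n i w ↔ piStat r n i wt = sgnRep r n i wt :=
  piStat_eq_sgn_iff_of_ascending_rep_general r n hr w wt hrel i
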